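/- Let Q be an n×n real symmetric positive-semidefinite matrix with Q·𝟙 = 0 whose kernel equals the span of the all-ones vector 𝟙 (the Laplacian of a connected weighted graph), and let λ₂(Q) > 0 be its smallest nonzero eigenvalue. Let α, β, p, q, k > 0 with kp < 1 and kq > 1, let T_c > 0, L ≥ 0, ζ > 0, and let κ₁,…,κₙ satisfy κᵢ ≥ n·γ(α,β,p,q,k)/(λ₂(Q)·T_c) for all i and κ·ζ ≥ L where κ = min_i κᵢ. Then for every disturbance d : [0,∞) → ℝⁿ with ‖d(t)‖₂ ≤ L for all t, every solution x : [0,∞) → ℝⁿ of x'ᵢ(t) = κᵢ·[(α|eᵢ(t)|^p + β|eᵢ(t)|^q)^k + ζ]·sign(eᵢ(t)) + dᵢ(t), where e(t) = −Q x(t), satisfies xᵢ(t) = x_j(t) for all i, j and all t ≥ T_c. -/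

import Mathlib

/-!
Write `w = Q x = -e` and `Φ(u) = (α u^p + β u^q)^k`. Along a solution, `V = xᵀ Q x` satisfies
`V' = 2 w ⬝ ẋ = -2 ∑ κᵢ (Φ |wᵢ| + ζ) |wᵢ| + 2 w ⬝ d ≤ -2 ∑ κᵢ Φ |wᵢ| |wᵢ|`, because
`|dᵢ| ≤ ‖d‖ ≤ L ≤ κᵢ ζ`. Since `λ₂ V ≤ ‖Q x‖² ≤ n max |wᵢ|²`, the quantity `u = √(λ₂ V / n)` is at
most `max |wᵢ|`, whence `u' ≤ -(λ₂ minᵢ κᵢ / n) Φ(u) ≤ -(γ / T_c) Φ(u)`. Thus `∫ dv / Φ(v)` over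
`[u(t), u(0)]` is at least `γ t / T_c` while `u > 0`. But `∫₀^∞ dv / Φ(v) = γ`: the substitutions
`u = (α/β)^(1/(q-p)) x`, `x^(q-p) = z`, `z = s / (1 - s)` turn it into a Beta integral. So `V`
vanishes by time `T_c`, and then `Q x = 0`, i.e. `x` is a consensus state.
-/

open Matrix MeasureTheory Set Real

theorem integral_rpow_mul_one_sub_rpow {a b : ℝ} (ha : 0 < a) (hb : 0 < b) :
    ∫ t in (0:ℝ)..1, t ^ (a - 1) * (1 - t) ^ (b - 1) = Gamma a * Gamma b / Gamma (a + b) := by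
  have h := Complex.betaIntegral_eq_Gamma_mul_div a b (by simpa) (by simpa)
  have hint : Complex.betaIntegral a b = ↑(∫ t in (0:ℝ)..1, t ^ (a - 1) * (1 - t) ^ (b - 1)) := by
    rw [Complex.betaIntegral, ← intervalIntegral.integral_ofReal]
    refine intervalIntegral.integral_congr fun t ht => ?_
    rw [uIcc_of_le zero_le_one] at ht
    push_cast
    rw [Complex.ofReal_cpow ht.1, Complex.ofReal_cpow (sub_nonneg.2 ht.2)]
    push_cast
    ring_nf
  rw [hint, ← Complex.ofReal_add] at h
  simp only [Complex.Gamma_ofReal] at h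
  exact_mod_cast h

theorem integral_Ioi_rpow_mul_one_add_rpow_neg (a b : ℝ) :
    ∫ z in Ioi (0:ℝ), z ^ (a - 1) * (1 + z) ^ (-(a + b)) =
      ∫ t in (0:ℝ)..1, t ^ (a - 1) * (1 - t) ^ (b - 1) := by
  have hderiv : ∀ t ∈ Ioo (0:ℝ) 1,
      HasDerivWithinAt (fun t => t / (1 - t)) ((1 - t) ^ 2)⁻¹ (Ioo 0 1) t := by
    intro t ht
    have h1t : 1 - t ≠ 0 := (sub_pos.2 ht.2).ne'
    have h : HasDerivAt (fun t : ℝ => t / (1 - t)) ((1 * (1 - t) - t * (0 - 1)) / (1 - t) ^ 2) t :=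
      (hasDerivAt_id' t).fun_div ((hasDerivAt_const t 1).fun_sub (hasDerivAt_id' t)) h1t
    refine h.hasDerivWithinAt.congr_deriv ?_
    field_simp
    ring
  have hinj : InjOn (fun t : ℝ => t / (1 - t)) (Ioo 0 1) := by
    intro s hs t ht hst
    rw [div_eq_div_iff (sub_pos.2 hs.2).ne' (sub_pos.2 ht.2).ne'] at hst
    linarith
  have himage : (fun t : ℝ => t / (1 - t)) '' Ioo 0 1 = Ioi 0 := by
    refine Subset.antisymm ?_ fun z (hz : 0 < z) => ⟨z / (1 + z), ?_, ?_⟩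
    · rintro _ ⟨t, ht, rfl⟩
      exact div_pos ht.1 (sub_pos.2 ht.2)
    · exact ⟨by positivity, (div_lt_one (by positivity)).2 (by linarith)⟩
    · field_simp
      ring
  rw [← himage, integral_image_eq_integral_abs_deriv_smul measurableSet_Ioo hderiv hinj,
    intervalIntegral.integral_of_le zero_le_one, integral_Ioc_eq_integral_Ioo]
  refine setIntegral_congr_fun measurableSet_Ioo fun t ht => ?_
  have h1t : 0 < 1 - t := sub_pos.2 ht.2
  have h1 : 1 + t / (1 - t) = (1 - t)⁻¹ := by field_simp; ring
  have h2 : (1 - t) ^ (b - 1) = (1 - t) ^ (a + b) / (1 - t) ^ (a - 1) / (1 - t) ^ 2 := by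
    rw [← rpow_natCast, ← rpow_sub h1t, ← rpow_sub h1t]
    norm_num
    ring_nf
  rw [h1, h2, abs_of_pos (by positivity), smul_eq_mul, div_rpow ht.1.le h1t.le, inv_rpow h1t.le,
    ← rpow_neg h1t.le, neg_neg]
  ring

theorem integral_Ioi_inv_rpow_add_rpow_rpow {p q : ℝ} (hpq : p < q) (k : ℝ) :
    ∫ x in Ioi (0:ℝ), ((x ^ p + x ^ q) ^ k)⁻¹ =
      (q - p)⁻¹ * ∫ z in Ioi (0:ℝ), z ^ ((1 - k * p) / (q - p) - 1) * (1 + z) ^ (-k) := by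
  have hr : 0 < q - p := sub_pos.2 hpq
  rw [← integral_const_mul]
  conv_rhs => rw [← integral_comp_rpow_Ioi _ hr.ne']
  refine setIntegral_congr_fun measurableSet_Ioi fun x (hx : 0 < x) => ?_
  have hsum : x ^ p + x ^ q = x ^ p * (1 + x ^ (q - p)) := by
    rw [mul_add, mul_one, ← rpow_add hx, add_sub_cancel]
  have hexp : x ^ (q - p - 1) * (x ^ (q - p)) ^ ((1 - k * p) / (q - p) - 1) = (x ^ p) ^ (-k) := by
    rw [← rpow_mul hx.le, ← rpow_mul hx.le, ← rpow_add hx]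
    congr 1
    field_simp
    ring
  rw [hsum, abs_of_pos hr, smul_eq_mul, mul_rpow (by positivity) (by positivity), mul_inv,
    ← rpow_neg (by positivity), ← rpow_neg (by positivity), ← hexp]
  field_simp

theorem integral_Ioi_inv_mul_rpow_add_mul_rpow {α β p q : ℝ} (hα : 0 < α) (hβ : 0 < β)
    (hpq : p ≠ q) (k : ℝ) :
    ∫ u in Ioi (0:ℝ), ((α * u ^ p + β * u ^ q) ^ k)⁻¹ =
      (α ^ k)⁻¹ * (α / β) ^ ((1 - k * p) / (q - p)) *
        ∫ x in Ioi (0:ℝ), ((x ^ p + x ^ q) ^ k)⁻¹ := by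
  have hr : q - p ≠ 0 := sub_ne_zero.2 hpq.symm
  set c := (α / β) ^ (q - p)⁻¹ with hc_def
  have hc : 0 < c := by positivity
  have hcr : c ^ (q - p) = α / β := by
    rw [hc_def, ← rpow_mul (by positivity), inv_mul_cancel₀ hr, rpow_one]
  have hbal : β * c ^ q = α * c ^ p := by
    rw [show q = p + (q - p) by ring, rpow_add hc, hcr]
    field_simp
  have hconst : c * ((α * c ^ p) ^ k)⁻¹ = (α ^ k)⁻¹ * (α / β) ^ ((1 - k * p) / (q - p)) := by
    rw [mul_rpow hα.le (by positivity), ← rpow_mul hc.le, ← hcr, ← rpow_mul hc.le, mul_inv,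
      ← rpow_neg hc.le, mul_div_cancel₀ _ hr, show 1 - k * p = 1 + -(p * k) by ring,
      rpow_add hc, rpow_one]
    ring
  have hsub := integral_comp_mul_left_Ioi (fun u => ((α * u ^ p + β * u ^ q) ^ k)⁻¹) 0 hc
  rw [mul_zero, smul_eq_mul] at hsub
  calc ∫ u in Ioi (0:ℝ), ((α * u ^ p + β * u ^ q) ^ k)⁻¹
      = c * ∫ x in Ioi (0:ℝ), ((α * (c * x) ^ p + β * (c * x) ^ q) ^ k)⁻¹ := by
        rw [hsub, mul_inv_cancel_left₀ hc.ne']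
    _ = c * ∫ x in Ioi (0:ℝ), ((α * c ^ p) ^ k)⁻¹ * ((x ^ p + x ^ q) ^ k)⁻¹ := by
        congr 1
        refine setIntegral_congr_fun measurableSet_Ioi fun x (hx : 0 < x) => ?_
        rw [mul_rpow hc.le hx.le, mul_rpow hc.le hx.le, ← mul_assoc, ← mul_assoc, hbal, ← mul_add,
          mul_rpow (by positivity) (by positivity), mul_inv]
    _ = _ := by rw [integral_const_mul, ← hconst, mul_assoc]

/-- The constant `γ(α, β, p, q, k)` of the paper. -/
noncomputable def settlingTimeBound (α β p q k : ℝ) : ℝ :=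
  Gamma ((1 - k * p) / (q - p)) * Gamma ((k * q - 1) / (q - p)) /
    (α ^ k * Gamma k * (q - p)) * (α / β) ^ ((1 - k * p) / (q - p))

section SettlingTimeBound

variable {α β p q k : ℝ}

theorem sub_pos_of_mul_lt_one_of_one_lt_mul (hk : 0 < k) (hkp : k * p < 1) (hkq : 1 < k * q) :
    0 < q - p :=
  pos_of_mul_pos_right (by linarith : 0 < k * (q - p)) hk.le

theorem settlingTimeBound_pos (hα : 0 < α) (hβ : 0 < β) (hk : 0 < k) (hkp : k * p < 1)
    (hkq : 1 < k * q) : 0 < settlingTimeBound α β p q k := by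
  have hr := sub_pos_of_mul_lt_one_of_one_lt_mul hk hkp hkq
  have ha := Gamma_pos_of_pos (div_pos (sub_pos.2 hkp) hr)
  have hb := Gamma_pos_of_pos (div_pos (sub_pos.2 hkq) hr)
  have hΓk := Gamma_pos_of_pos hk
  unfold settlingTimeBound
  positivity

theorem integral_Ioi_inv_rpow_eq_settlingTimeBound (hα : 0 < α) (hβ : 0 < β) (hk : 0 < k)
    (hkp : k * p < 1) (hkq : 1 < k * q) :
    ∫ u in Ioi (0:ℝ), ((α * u ^ p + β * u ^ q) ^ k)⁻¹ = settlingTimeBound α β p q k := by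
  have hr := sub_pos_of_mul_lt_one_of_one_lt_mul hk hkp hkq
  have ha : 0 < (1 - k * p) / (q - p) := div_pos (sub_pos.2 hkp) hr
  have hb : 0 < (k * q - 1) / (q - p) := div_pos (sub_pos.2 hkq) hr
  have hab : (1 - k * p) / (q - p) + (k * q - 1) / (q - p) = k := by field_simp; ring
  have hbeta := integral_Ioi_rpow_mul_one_add_rpow_neg ((1 - k * p) / (q - p)) ((k * q - 1) / (q - p))
  rw [hab, integral_rpow_mul_one_sub_rpow ha hb, hab] at hbeta
  rw [integral_Ioi_inv_mul_rpow_add_mul_rpow hα hβ (sub_pos.1 hr).ne,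
    integral_Ioi_inv_rpow_add_rpow_rpow (sub_pos.1 hr), hbeta, settlingTimeBound]
  field_simp

theorem continuousOn_rpow_add_rpow_rpow (hk : 0 ≤ k) :
    ContinuousOn (fun v : ℝ => (α * v ^ p + β * v ^ q) ^ k) (Ioi 0) := by
  have hpow : ∀ r : ℝ, ContinuousOn (fun v : ℝ => v ^ r) (Ioi 0) := fun r =>
    continuousOn_id.rpow_const fun v hv => Or.inl (ne_of_gt hv)
  exact ((continuousOn_const.mul (hpow p)).add (continuousOn_const.mul (hpow q))).rpow_const
    fun _ _ => Or.inr hk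

theorem monotoneOn_rpow_add_rpow_rpow (hα : 0 ≤ α) (hβ : 0 ≤ β) (hp : 0 ≤ p) (hq : 0 ≤ q)
    (hk : 0 ≤ k) : MonotoneOn (fun v : ℝ => (α * v ^ p + β * v ^ q) ^ k) (Ici 0) := by
  intro u (hu : 0 ≤ u) v _ huv
  have := rpow_le_rpow hu huv hp
  have := rpow_le_rpow hu huv hq
  exact rpow_le_rpow (by positivity) (by gcongr) hk

end SettlingTimeBound

section SettlingTime

variable {φ : ℝ → ℝ}

theorem hasDerivAt_integral_inv (hφ : ContinuousOn φ (Ioi 0)) (hφ_pos : ∀ v, 0 < v → 0 < φ v)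
    (hint : IntegrableOn (fun v => (φ v)⁻¹) (Ioi 0)) {y : ℝ} (hy : 0 < y) :
    HasDerivAt (fun y => ∫ v in (0:ℝ)..y, (φ v)⁻¹) (φ y)⁻¹ y := by
  have hφinv : ContinuousOn (fun v => (φ v)⁻¹) (Ioi 0) := hφ.inv₀ fun v hv => (hφ_pos v hv).ne'
  exact intervalIntegral.integral_hasDerivAt_right
    ((intervalIntegrable_iff_integrableOn_Ioc_of_le hy.le).2 (hint.mono_set Ioc_subset_Ioi_self))
    (hφinv.stronglyMeasurableAtFilter isOpen_Ioi y hy) (hφinv.continuousAt (Ioi_mem_nhds hy))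

theorem integral_inv_le_integral_Ioi (hφ_pos : ∀ v, 0 < v → 0 < φ v)
    (hint : IntegrableOn (fun v => (φ v)⁻¹) (Ioi 0)) {y : ℝ} (hy : 0 ≤ y) :
    ∫ v in (0:ℝ)..y, (φ v)⁻¹ ≤ ∫ v in Ioi 0, (φ v)⁻¹ := by
  rw [intervalIntegral.integral_of_le hy]
  refine setIntegral_mono_set hint ?_ Ioc_subset_Ioi_self.eventuallyLE
  filter_upwards [ae_restrict_mem measurableSet_Ioi] with v (hv : 0 < v)
  exact (inv_pos.2 (hφ_pos v hv)).le

theorem integral_inv_pos (hφ_pos : ∀ v, 0 < v → 0 < φ v)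
    (hint : IntegrableOn (fun v => (φ v)⁻¹) (Ioi 0)) {y : ℝ} (hy : 0 < y) :
    0 < ∫ v in (0:ℝ)..y, (φ v)⁻¹ :=
  intervalIntegral.intervalIntegral_pos_of_pos_on
    ((intervalIntegrable_iff_integrableOn_Ioc_of_le hy.le).2 (hint.mono_set Ioc_subset_Ioi_self))
    (fun v hv => inv_pos.2 (hφ_pos v hv.1)) hy

/-- While `u > 0`, the function `s ↦ ∫₀^{u s} dv / φ(v) + c s` is nonincreasing; its value at `0`
is at most `∫₀^∞ dv / φ(v) ≤ c T`, whatever `u 0` is. -/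
theorem exists_nonpos_of_deriv_le_neg_mul {u u' : ℝ → ℝ} {c T : ℝ} (hT : 0 ≤ T)
    (hφ : ContinuousOn φ (Ioi 0)) (hφ_pos : ∀ v, 0 < v → 0 < φ v)
    (hint : IntegrableOn (fun v => (φ v)⁻¹) (Ioi 0)) (hcT : ∫ v in Ioi 0, (φ v)⁻¹ ≤ c * T)
    (hu : ∀ s ∈ Icc 0 T, 0 < u s → HasDerivAt u (u' s) s)
    (hu' : ∀ s ∈ Icc 0 T, 0 < u s → u' s ≤ -c * φ (u s)) :
    ∃ s ∈ Icc 0 T, u s ≤ 0 := by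
  by_contra! hpos
  set H : ℝ → ℝ := fun y => ∫ v in (0:ℝ)..y, (φ v)⁻¹
  have hW : ∀ s ∈ Icc 0 T, HasDerivAt (fun s => H (u s) + c * s) ((φ (u s))⁻¹ * u' s + c) s :=
    fun s hs => ((hasDerivAt_integral_inv hφ hφ_pos hint (hpos s hs)).comp s
      (hu s hs (hpos s hs))).add (by simpa using (hasDerivAt_id s).const_mul c)
  have hW' : ∀ s ∈ Icc 0 T, (φ (u s))⁻¹ * u' s + c ≤ 0 := by
    intro s hs
    have hφs := hφ_pos _ (hpos s hs)
    have := mul_le_mul_of_nonneg_left (hu' s hs (hpos s hs)) (inv_pos.2 hφs).le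
    rw [mul_comm (-c), ← mul_assoc, inv_mul_cancel₀ hφs.ne', one_mul] at this
    linarith
  have hanti : AntitoneOn (fun s => H (u s) + c * s) (Icc 0 T) := by
    refine antitoneOn_of_deriv_nonpos (convex_Icc 0 T)
      (fun s hs => (hW s hs).continuousAt.continuousWithinAt)
      (fun s hs => (hW s (interior_subset hs)).differentiableAt.differentiableWithinAt)
      fun s hs => ?_
    rw [(hW s (interior_subset hs)).deriv]
    exact hW' s (interior_subset hs)
  have h0T := hanti (left_mem_Icc.2 hT) (right_mem_Icc.2 hT) hT
  have hH0 := integral_inv_le_integral_Ioi hφ_pos hint (hpos 0 (left_mem_Icc.2 hT)).le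
  have hHT := integral_inv_pos hφ_pos hint (hpos T (right_mem_Icc.2 hT))
  simp only [mul_zero, add_zero] at h0T
  linarith

theorem nonpos_of_deriv_le_neg_mul_sqrt {V V' : ℝ → ℝ} {a b T : ℝ} (ha : 0 < a) (hb : 0 ≤ b)
    (hT : 0 ≤ T) (hφ : ContinuousOn φ (Ioi 0)) (hφ_pos : ∀ v, 0 < v → 0 < φ v)
    (hint : IntegrableOn (fun v => (φ v)⁻¹) (Ioi 0)) (habT : ∫ v in Ioi 0, (φ v)⁻¹ ≤ a * b * T)
    (hV : ∀ t, 0 ≤ t → HasDerivAt V (V' t) t)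
    (hV' : ∀ t, 0 ≤ t → V' t ≤ -2 * b * (φ √(a * V t) * √(a * V t))) :
    ∀ t, T ≤ t → V t ≤ 0 := by
  have hanti : AntitoneOn V (Ici 0) := by
    refine antitoneOn_of_deriv_nonpos (convex_Ici 0)
      (fun t ht => (hV t ht).continuousAt.continuousWithinAt)
      (fun t ht => (hV t (interior_subset ht)).differentiableAt.differentiableWithinAt)
      fun t ht => ?_
    rw [(hV t (interior_subset ht)).deriv]
    refine (hV' t (interior_subset ht)).trans (mul_nonpos_of_nonpos_of_nonneg (by linarith) ?_)
    rcases (sqrt_nonneg (a * V t)).eq_or_lt with h | h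
    · rw [← h, mul_zero]
    · exact (mul_pos (hφ_pos _ h) h).le
  obtain ⟨s, hs, hVs⟩ := exists_nonpos_of_deriv_le_neg_mul (u := fun t => √(a * V t))
    (u' := fun t => a * V' t / (2 * √(a * V t))) (c := a * b) hT hφ hφ_pos hint habT
    (fun s hs hpos => ((hV s hs.1).const_mul a).sqrt (sqrt_pos.1 hpos).ne')
    (fun s hs hpos => by
      rw [div_le_iff₀ (by positivity)]
      linarith [mul_le_mul_of_nonneg_left (hV' s hs.1) ha.le])
  intro t ht
  have haV : a * V s ≤ 0 := sqrt_eq_zero'.1 (le_antisymm hVs (sqrt_nonneg _))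
  exact (hanti hs.1 (hs.1.trans (hs.2.trans ht)) (hs.2.trans ht)).trans
    (nonpos_of_mul_nonpos_right haV ha)

end SettlingTime

section Consensus

variable {ι : Type*} [Fintype ι]

theorem HasDerivAt.dotProduct {f g : ℝ → ι → ℝ} {f' g' : ι → ℝ} {t : ℝ}
    (hf : HasDerivAt f f' t) (hg : HasDerivAt g g' t) :
    HasDerivAt (fun s => f s ⬝ᵥ g s) (f' ⬝ᵥ g t + f t ⬝ᵥ g') t := by
  show HasDerivAt (fun s => ∑ i, f s i * g s i) (∑ i, f' i * g t i + ∑ i, f t i * g' i) t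
  rw [← Finset.sum_add_distrib]
  exact HasDerivAt.fun_sum fun i _ => (hasDerivAt_pi.1 hf i).mul (hasDerivAt_pi.1 hg i)

theorem HasDerivAt.mulVec (Q : Matrix ι ι ℝ) {f : ℝ → ι → ℝ} {f' : ι → ℝ} {t : ℝ}
    (hf : HasDerivAt f f' t) : HasDerivAt (fun s => Q *ᵥ f s) (Q *ᵥ f') t :=
  (Q.mulVecLin.toContinuousLinearMap.hasFDerivAt.comp_hasDerivAt t hf :)

theorem HasDerivAt.dotProduct_mulVec_self {Q : Matrix ι ι ℝ} (hQ : Q.IsSymm) {f : ℝ → ι → ℝ}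
    {f' : ι → ℝ} {t : ℝ} (hf : HasDerivAt f f' t) :
    HasDerivAt (fun s => f s ⬝ᵥ Q *ᵥ f s) (2 * (Q *ᵥ f t ⬝ᵥ f')) t := by
  convert hf.dotProduct (hf.mulVec Q) using 1
  rw [dotProduct_comm f', dotProduct_mulVec (f t), ← mulVec_transpose, hQ.eq]
  ring

theorem Matrix.PosSemidef.mul_dotProduct_mulVec_le {Q : Matrix ι ι ℝ} (hQ : Q.PosSemidef)
    {l : ℝ} (hl : ∀ μ : ℝ, μ ≠ 0 → (∃ v : ι → ℝ, v ≠ 0 ∧ Q *ᵥ v = μ • v) → l ≤ μ)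
    (v : ι → ℝ) : l * (v ⬝ᵥ Q *ᵥ v) ≤ Q *ᵥ v ⬝ᵥ Q *ᵥ v := by
  classical
  have hH : Q.IsHermitian := hQ.isHermitian
  set U : Matrix ι ι ℝ := (hH.eigenvectorUnitary : Matrix ι ι ℝ)
  set μ : ι → ℝ := hH.eigenvalues
  have hUT : star U = Uᵀ := by ext; simp [star_apply]
  have hUTU : Uᵀ * U = 1 := hUT ▸ Unitary.coe_star_mul_self hH.eigenvectorUnitary
  have hQ_eq : Q = U * diagonal μ * Uᵀ := by
    simpa [Unitary.conjStarAlgAut_apply, ← hUT] using hH.spectral_theorem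
  have hmove : ∀ a z : ι → ℝ, a ⬝ᵥ U *ᵥ z = Uᵀ *ᵥ a ⬝ᵥ z := fun a z => by
    rw [dotProduct_mulVec, mulVec_transpose]
  set y := Uᵀ *ᵥ v
  have hquad : v ⬝ᵥ Q *ᵥ v = ∑ j, μ j * y j ^ 2 := by
    rw [hQ_eq, ← mulVec_mulVec, ← mulVec_mulVec, hmove, dotProduct]
    refine Finset.sum_congr rfl fun j _ => ?_
    rw [mulVec_diagonal]
    ring
  have hsq : Q *ᵥ v ⬝ᵥ Q *ᵥ v = ∑ j, μ j ^ 2 * y j ^ 2 := by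
    rw [hQ_eq, ← mulVec_mulVec, ← mulVec_mulVec, hmove, mulVec_mulVec, hUTU, one_mulVec,
      dotProduct]
    refine Finset.sum_congr rfl fun j _ => ?_
    rw [mulVec_diagonal]
    ring
  have hμ : ∀ j, μ j = 0 ∨ l ≤ μ j := by
    refine fun j => or_iff_not_imp_left.2 fun h => hl _ h ⟨_, ?_, hH.mulVec_eigenvectorBasis j⟩
    intro h0
    apply hH.eigenvectorBasis.orthonormal.ne_zero j
    simpa using congrArg (WithLp.equiv 2 (ι → ℝ)).symm h0
  rw [hquad, hsq, Finset.mul_sum]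
  refine Finset.sum_le_sum fun j _ => ?_
  rcases hμ j with h | h
  · simp [h]
  · have hμj : 0 ≤ μ j := hQ.eigenvalues_nonneg j
    have := mul_le_mul_of_nonneg_right h (mul_nonneg hμj (sq_nonneg (y j)))
    linarith

theorem mul_apply_mul_le_sum [Nonempty ι] {w κ : ι → ℝ} {φ : ℝ → ℝ} {b y : ℝ}
    (hφ : MonotoneOn φ (Ici 0)) (hφ_nonneg : ∀ v, 0 ≤ v → 0 ≤ φ v) (hb : 0 ≤ b)
    (hκ : ∀ i, b ≤ κ i) (hy : 0 ≤ y) (hyw : Fintype.card ι * y ^ 2 ≤ w ⬝ᵥ w) :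
    b * φ y * y ≤ ∑ i, κ i * φ |w i| * |w i| := by
  obtain ⟨i₀, hi₀⟩ := Finite.exists_max fun i => |w i|
  have hww : w ⬝ᵥ w ≤ Fintype.card ι * |w i₀| ^ 2 := by
    rw [← nsmul_eq_mul]
    refine Finset.sum_le_card_nsmul _ _ _ fun i _ => ?_
    rw [← sq, ← sq_abs]
    exact pow_le_pow_left₀ (abs_nonneg _) (hi₀ i) 2
  have hy_le : y ≤ |w i₀| := by
    have hcard : (0 : ℝ) < Fintype.card ι := Nat.cast_pos.2 Fintype.card_pos
    exact (pow_le_pow_iff_left₀ hy (abs_nonneg _) two_ne_zero).1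
      (le_of_mul_le_mul_left (hyw.trans hww) hcard)
  have hκ₀ : 0 ≤ κ i₀ := hb.trans (hκ i₀)
  have hφ₀ : 0 ≤ φ |w i₀| := hφ_nonneg _ (abs_nonneg _)
  calc b * φ y * y ≤ κ i₀ * φ |w i₀| * |w i₀| :=
        mul_le_mul (mul_le_mul (hκ i₀) (hφ hy (abs_nonneg (w i₀)) hy_le) (hφ_nonneg _ hy) hκ₀)
          hy_le hy (mul_nonneg hκ₀ hφ₀)
    _ ≤ ∑ i, κ i * φ |w i| * |w i| :=
        Finset.single_le_sum (fun i _ => mul_nonneg (mul_nonneg (hb.trans (hκ i))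
          (hφ_nonneg _ (abs_nonneg _))) (abs_nonneg _)) (Finset.mem_univ i₀)

theorem Real.sign_mul_self (a : ℝ) : Real.sign a * a = |a| := by
  rcases lt_trichotomy a 0 with h | rfl | h
  · rw [Real.sign_of_neg h, abs_of_neg h, neg_one_mul]
  · simp
  · rw [Real.sign_of_pos h, abs_of_pos h, one_mul]

theorem mul_protocol_le {w κ ψ ζ d L : ℝ} (hd : |d| ≤ L) (hκζ : L ≤ κ * ζ) :
    w * (κ * (ψ + ζ) * Real.sign (-w) + d) ≤ -(κ * ψ * |w|) := by
  have hwd : w * d ≤ |w| * (κ * ζ) :=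
    (le_abs_self _).trans (abs_mul w d ▸ mul_le_mul_of_nonneg_left (hd.trans hκζ) (abs_nonneg w))
  have hexpand : w * (κ * (ψ + ζ) * Real.sign (-w) + d) = -(κ * (ψ + ζ) * |w|) + w * d := by
    rw [Real.sign_neg, ← Real.sign_mul_self w]
    ring
  linarith

theorem dotProduct_protocol_le {w κ d : ι → ℝ} {φ : ℝ → ℝ} {ζ L : ℝ} (hd : √(d ⬝ᵥ d) ≤ L)
    (hκζ : ∀ i, L ≤ κ i * ζ) :
    w ⬝ᵥ (fun i => κ i * (φ |-(w i)| + ζ) * Real.sign (-(w i)) + d i) ≤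
      -∑ i, κ i * φ |w i| * |w i| := by
  rw [dotProduct, ← Finset.sum_neg_distrib]
  refine Finset.sum_le_sum fun i _ => ?_
  rw [abs_neg]
  refine mul_protocol_le ((abs_le_sqrt ?_).trans hd) (hκζ i)
  simpa [dotProduct, sq] using
    Finset.single_le_sum (fun j _ => mul_self_nonneg (d j)) (Finset.mem_univ i)

theorem two_mul_dotProduct_protocol_le [Nonempty ι] {Q : Matrix ι ι ℝ} (hQ : Q.PosSemidef)
    {l : ℝ} (hl_pos : 0 < l)
    (hl : ∀ μ : ℝ, μ ≠ 0 → (∃ v : ι → ℝ, v ≠ 0 ∧ Q *ᵥ v = μ • v) → l ≤ μ)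
    {φ : ℝ → ℝ} (hφ : MonotoneOn φ (Ici 0)) (hφ_nonneg : ∀ v, 0 ≤ v → 0 ≤ φ v)
    {κ d : ι → ℝ} {b ζ L : ℝ} (hb : 0 ≤ b) (hκ : ∀ i, b ≤ κ i) (hd : √(d ⬝ᵥ d) ≤ L)
    (hκζ : ∀ i, L ≤ κ i * ζ) (x : ι → ℝ) :
    2 * (Q *ᵥ x ⬝ᵥ fun i => κ i * (φ |-((Q *ᵥ x) i)| + ζ) * Real.sign (-((Q *ᵥ x) i)) + d i) ≤
      -2 * b * (φ √(l / Fintype.card ι * (x ⬝ᵥ Q *ᵥ x)) *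
        √(l / Fintype.card ι * (x ⬝ᵥ Q *ᵥ x))) := by
  have hV : 0 ≤ x ⬝ᵥ Q *ᵥ x := by simpa using hQ.dotProduct_mulVec_nonneg x
  have hcard : (0 : ℝ) < Fintype.card ι := Nat.cast_pos.2 Fintype.card_pos
  have hy : Fintype.card ι * √(l / Fintype.card ι * (x ⬝ᵥ Q *ᵥ x)) ^ 2 ≤ Q *ᵥ x ⬝ᵥ Q *ᵥ x := by
    rw [sq_sqrt (by positivity), ← mul_assoc, mul_div_cancel₀ _ hcard.ne']
    exact hQ.mul_dotProduct_mulVec_le hl x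
  have := mul_apply_mul_le_sum hφ hφ_nonneg hb hκ (sqrt_nonneg _) hy
  have := dotProduct_protocol_le (w := Q *ᵥ x) (φ := φ) hd hκζ
  linarith

end Consensus

theorem protocolA_predefined_time_consensus_static_general
    (n : ℕ)
    (Q : Matrix (Fin n) (Fin n) ℝ)
    (hQpsd : Q.PosSemidef)
    (hQker : ∀ v : Fin n → ℝ, Q.mulVec v = 0 ↔ ∃ c : ℝ, v = fun _ => c)
    (lam2 : ℝ) (hlam2pos : 0 < lam2)
    (hlam2min : ∀ μ : ℝ, μ ≠ 0 → (∃ v : Fin n → ℝ, v ≠ 0 ∧ Q.mulVec v = μ • v) →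
      lam2 ≤ μ)
    (α β p q k : ℝ) (hα : 0 < α) (hβ : 0 < β) (hp : 0 < p) (hq : 0 < q) (hk : 0 < k)
    (hkp : k * p < 1) (hkq : 1 < k * q)
    (Tc : ℝ) (hTc : 0 < Tc) (L : ℝ) (ζ : ℝ)
    (κ : Fin n → ℝ)
    (hκ : ∀ i, (n : ℝ) *
        (Real.Gamma ((1 - k * p) / (q - p)) * Real.Gamma ((k * q - 1) / (q - p)) /
          (α ^ k * Real.Gamma k * (q - p)) * (α / β) ^ ((1 - k * p) / (q - p))) /
        (lam2 * Tc) ≤ κ i)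
    (hκζ : ∀ i, L ≤ κ i * ζ)
    (d : ℝ → Fin n → ℝ) (hd : ∀ t, Real.sqrt (d t ⬝ᵥ d t) ≤ L)
    (x : ℝ → Fin n → ℝ)
    (hx : ∀ t, 0 ≤ t →
      HasDerivAt x
        (fun i =>
          κ i * ((α * |-(Q.mulVec (x t) i)| ^ p + β * |-(Q.mulVec (x t) i)| ^ q) ^ k
                  + ζ) * Real.sign (-(Q.mulVec (x t) i)) + d t i) t) :
    ∀ t, Tc ≤ t → ∀ i j, x t i = x t j := by
  intro t ht i j
  have : Nonempty (Fin n) := ⟨i⟩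
  have hn : (0 : ℝ) < n := Nat.cast_pos.2 i.pos
  have hγ := integral_Ioi_inv_rpow_eq_settlingTimeBound hα hβ hk hkp hkq
  have hγ_pos := settlingTimeBound_pos hα hβ hk hkp hkq
  have hV := nonpos_of_deriv_le_neg_mul_sqrt (V := fun s => x s ⬝ᵥ Q *ᵥ x s)
    (a := lam2 / Fintype.card (Fin n)) (b := n * settlingTimeBound α β p q k / (lam2 * Tc))
    (by positivity) (by positivity) hTc.le (continuousOn_rpow_add_rpow_rpow hk.le)
    (fun v hv => by positivity) (Integrable.of_integral_ne_zero (hγ ▸ hγ_pos.ne'))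
    (by rw [hγ, Fintype.card_fin]; field_simp; rfl)
    (fun s hs => (hx s hs).dotProduct_mulVec_self (isHermitian_iff_isSymm.1 hQpsd.isHermitian))
    (fun s _ => two_mul_dotProduct_protocol_le hQpsd hlam2pos hlam2min
      (monotoneOn_rpow_add_rpow_rpow hα.le hβ.le hp.le hq.le hk.le) (fun v hv => by positivity)
      (by positivity) hκ (hd s) hκζ (x s)) t ht
  have hQx : Q *ᵥ x t = 0 := (hQpsd.dotProduct_mulVec_zero_iff (x t)).1 <| by
    simpa using le_antisymm hV (by simpa using hQpsd.dotProduct_mulVec_nonneg (x t))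
  obtain ⟨c, hc⟩ := (hQker (x t)).1 hQx
  rw [hc]

/-- Predefined-time consensus of protocol (7) on a static connected
graph, despite disturbances with Euclidean norm bounded by `L`: if
`κᵢ ≥ n·γ/(λ₂(Q)·T_c)` and `(min κᵢ)·ζ ≥ L`, then consensus is reached before `T_c`.
Here `lam2` is the smallest nonzero eigenvalue of the Laplacian `Q`. -/
theorem protocolA_predefined_time_consensus_static
    (n : ℕ) (hn : 0 < n)
    (Q : Matrix (Fin n) (Fin n) ℝ)
    (hQsymm : Q.IsSymm)
    (hQpsd : Q.PosSemidef)
    (hQker : ∀ v : Fin n → ℝ, Q.mulVec v = 0 ↔ ∃ c : ℝ, v = fun _ => c)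
    (lam2 : ℝ) (hlam2pos : 0 < lam2)
    (hlam2eig : ∃ v : Fin n → ℝ, v ≠ 0 ∧ Q.mulVec v = lam2 • v)
    (hlam2min : ∀ μ : ℝ, μ ≠ 0 → (∃ v : Fin n → ℝ, v ≠ 0 ∧ Q.mulVec v = μ • v) →
      lam2 ≤ μ)
    (α β p q k : ℝ) (hα : 0 < α) (hβ : 0 < β) (hp : 0 < p) (hq : 0 < q) (hk : 0 < k)
    (hkp : k * p < 1) (hkq : 1 < k * q)
    (Tc : ℝ) (hTc : 0 < Tc) (L : ℝ) (hL : 0 ≤ L) (ζ : ℝ) (hζ : 0 < ζ)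
    (κ : Fin n → ℝ)
    (hκ : ∀ i, (n : ℝ) *
        (Real.Gamma ((1 - k * p) / (q - p)) * Real.Gamma ((k * q - 1) / (q - p)) /
          (α ^ k * Real.Gamma k * (q - p)) * (α / β) ^ ((1 - k * p) / (q - p))) /
        (lam2 * Tc) ≤ κ i)
    (hκζ : ∀ i, L ≤ κ i * ζ)
    (d : ℝ → Fin n → ℝ) (hd : ∀ t, Real.sqrt (d t ⬝ᵥ d t) ≤ L)
    (x : ℝ → Fin n → ℝ)
    (hx : ∀ t, 0 ≤ t →
      HasDerivAt x
        (fun i =>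
          κ i * ((α * |-(Q.mulVec (x t) i)| ^ p + β * |-(Q.mulVec (x t) i)| ^ q) ^ k
                  + ζ) * Real.sign (-(Q.mulVec (x t) i)) + d t i) t) :
    ∀ t, Tc ≤ t → ∀ i j, x t i = x t j :=
  protocolA_predefined_time_consensus_static_general n Q hQpsd hQker lam2 hlam2pos hlam2min α β p q
    k hα hβ hp hq hk hkp hkq Tc hTc L ζ κ hκ hκζ d hd x hx
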